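/- For all L, M ∈ 𝐋 the following hold: (a) if O ∈ 𝐎*(L,L) and P ∈ 𝐎*(L,M), then the product PO belongs to 𝐎*(L,M); (b) if P ∈ 𝐎*(L,M), then Pᵀ ∈ 𝐎*(M,L); (c) if (MᵀL)_{t,t} is symmetric for every t = 1,…,T, then 𝐎*(L,M) = 𝐎*(M,L). -/

import Mathlib

open Matrix Filter Topology

/-!
Right multiplication by an orthogonal matrix preserves the Frobenius norm, and
`‖A - B O‖_F = ‖(A - B O) Oᵀ‖_F = ‖B - A Oᵀ‖_F`. Hence `d_ABW` is symmetric, transposition maps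
`𝐎*(L,M)` into `𝐎*(M,L)`, and every `O ∈ 𝐎*(L,L)` satisfies `L O = L`, so that
`L - M P O = (L - M P) O`. Finally `‖L - M O‖_F² = ‖L‖_F² + ‖M‖_F² - 2 tr((MᵀL)ᵀ O)`, and for a
block diagonal `O` only the diagonal blocks of `MᵀL` enter the trace; when they are symmetric
the objective is unchanged under `L ↔ M`.
-/

/-- Square matrices of size `dT × dT`, indexed by blocks: index `(t, i)` is
row/column `i` within block `t`. -/
abbrev Mat (d T : ℕ) := Matrix (Fin T × Fin d) (Fin T × Fin d) ℝ

/-- The `t`-th diagonal `d × d` block of a `dT × dT` matrix. -/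
def blk {d T : ℕ} (A : Mat d T) (t : Fin T) : Matrix (Fin d) (Fin d) ℝ :=
  fun i j => A (t, i) (t, j)

/-- The `t`-th block column of a `dT × dT` matrix, a `dT × d` matrix. -/
def colBlk {d T : ℕ} (A : Mat d T) (t : Fin T) : Matrix (Fin T × Fin d) (Fin d) ℝ :=
  fun p j => A p (t, j)

/-- Membership in `𝐋`: block lower triangular matrices. -/
def memL {d T : ℕ} (A : Mat d T) : Prop :=
  ∀ (t s : Fin T) (i j : Fin d), t < s → A (t, i) (s, j) = 0

/-- Membership in `𝐎`: block diagonal matrices with orthogonal `d × d` diagonal blocks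
(equivalently: block diagonal and orthogonal). -/
def memO {d T : ℕ} (O : Mat d T) : Prop :=
  (∀ (t s : Fin T) (i j : Fin d), t ≠ s → O (t, i) (s, j) = 0) ∧ Oᵀ * O = 1

/-- The Frobenius norm of a real matrix. -/
noncomputable def frobNorm {m n : Type*} [Fintype m] [Fintype n] (A : Matrix m n ℝ) : ℝ :=
  Real.sqrt (∑ i, ∑ j, (A i j) ^ 2)

/-- The Frobenius inner product of two real matrices. -/
noncomputable def frobInner {m n : Type*} [Fintype m] [Fintype n] (A B : Matrix m n ℝ) : ℝ :=
  ∑ i, ∑ j, A i j * B i j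

/-- The adapted Bures–Wasserstein distance `d_ABW(L, M) = inf_{O ∈ 𝐎} ‖L - M O‖_F`. -/
noncomputable def dABW {d T : ℕ} (L M : Mat d T) : ℝ :=
  sInf {r : ℝ | ∃ O : Mat d T, memO O ∧ r = frobNorm (L - M * O)}

/-- The set `𝐎*(L, M)` of optimizers of `inf_{O ∈ 𝐎} ‖L - M O‖_F`. -/
noncomputable def OStar {d T : ℕ} (L M : Mat d T) : Set (Mat d T) :=
  {O | memO O ∧ frobNorm (L - M * O) = dABW L M}

/-- The set `𝐕(L) = {M P - L : M ∈ 𝐋, P ∈ 𝐎*(L, M)}`. -/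
noncomputable def VSet {d T : ℕ} (L : Mat d T) : Set (Mat d T) :=
  {V | ∃ M P : Mat d T, memL M ∧ P ∈ OStar L M ∧ V = M * P - L}

/-- The set `𝒱(L) = {V ∈ 𝐋 : (Vᵀ L)_{t,t} is symmetric for all t}`. -/
def calV {d T : ℕ} (L : Mat d T) : Set (Mat d T) :=
  {V | memL V ∧ ∀ t : Fin T, (blk (Vᵀ * L) t).IsSymm}

/-- The set `𝐋^reg = {L ∈ 𝐋 : (Lᵀ L)_{t,t} is positive definite for all t}`. -/
def LReg {d T : ℕ} : Set (Mat d T) :=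
  {L | memL L ∧ ∀ t : Fin T, (blk (Lᵀ * L) t).PosDef}

/-- The sum of the singular values of a real square matrix `A`,
i.e. the trace of the positive semidefinite square root of `Aᵀ A`. -/
noncomputable def svSum {n : ℕ} (A : Matrix (Fin n) (Fin n) ℝ) : ℝ :=
  ((Matrix.posSemidef_conjTranspose_mul_self A).1.eigenvectorUnitary.1 *
    Matrix.diagonal ((RCLike.ofReal : ℝ → ℝ) ∘ (√·) ∘ (Matrix.posSemidef_conjTranspose_mul_self A).1.eigenvalues) *
    (star (Matrix.posSemidef_conjTranspose_mul_self A).1.eigenvectorUnitary :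
      Matrix (Fin n) (Fin n) ℝ)).trace

/-- The operator norm of a real matrix: the supremum of the euclidean norm `‖A x‖₂`
over the euclidean unit ball. -/
noncomputable def opNorm {m n : Type*} [Fintype m] [Fintype n] (A : Matrix m n ℝ) : ℝ :=
  sSup {r : ℝ | ∃ x : n → ℝ, (∑ j, (x j) ^ 2) ≤ 1 ∧ r = Real.sqrt (∑ i, (A.mulVec x i) ^ 2)}

section Frobenius

variable {m n : Type*} [Fintype m] [Fintype n]

lemma frobNorm_nonneg (A : Matrix m n ℝ) : 0 ≤ frobNorm A :=
  Real.sqrt_nonneg _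

lemma frobNorm_neg (A : Matrix m n ℝ) : frobNorm (-A) = frobNorm A := by
  simp [frobNorm]

lemma frobNorm_eq_zero_iff {A : Matrix m n ℝ} : frobNorm A = 0 ↔ A = 0 := by
  have hnonneg : ∀ i ∈ Finset.univ, 0 ≤ ∑ j, A i j ^ 2 := fun i _ =>
    Finset.sum_nonneg fun j _ => sq_nonneg (A i j)
  simp only [frobNorm, Real.sqrt_eq_zero (Finset.sum_nonneg hnonneg),
    Finset.sum_eq_zero_iff_of_nonneg hnonneg, Finset.mem_univ, true_implies,
    Finset.sum_eq_zero_iff_of_nonneg (fun j _ => sq_nonneg _), pow_eq_zero_iff two_ne_zero]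
  exact ⟨fun h => Matrix.ext h, fun h i j => by simp [h]⟩

lemma frobNorm_sq (A : Matrix m n ℝ) : frobNorm A ^ 2 = (Aᵀ * A).trace := by
  rw [frobNorm, Real.sq_sqrt (by positivity), Matrix.trace, Finset.sum_comm]
  simp [Matrix.mul_apply, sq]

lemma frobNorm_eq_frobNorm_iff {A B : Matrix m n ℝ} :
    frobNorm A = frobNorm B ↔ (Aᵀ * A).trace = (Bᵀ * B).trace := by
  rw [← frobNorm_sq, ← frobNorm_sq, sq_eq_sq₀ (frobNorm_nonneg A) (frobNorm_nonneg B)]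

variable [DecidableEq n]

lemma trace_transpose_mul_orthogonal {O : Matrix n n ℝ} (hO : O * Oᵀ = 1)
    (A B : Matrix m n ℝ) : ((A * O)ᵀ * (B * O)).trace = (Aᵀ * B).trace := by
  rw [transpose_mul, Matrix.mul_assoc, trace_mul_comm, Matrix.mul_assoc, Matrix.mul_assoc, hO,
    Matrix.mul_one]

lemma frobNorm_mul_orthogonal (A : Matrix m n ℝ) {O : Matrix n n ℝ} (hO : O * Oᵀ = 1) :
    frobNorm (A * O) = frobNorm A :=
  frobNorm_eq_frobNorm_iff.mpr (trace_transpose_mul_orthogonal hO A A)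

lemma frobNorm_sub_mul_orthogonal_sq (A B : Matrix m n ℝ) {O : Matrix n n ℝ}
    (hO : O * Oᵀ = 1) :
    frobNorm (A - B * O) ^ 2 = frobNorm A ^ 2 + frobNorm B ^ 2 - 2 * ((Bᵀ * A)ᵀ * O).trace := by
  have hcross : ((B * O)ᵀ * A).trace = ((Bᵀ * A)ᵀ * O).trace := by
    rw [← trace_transpose, transpose_mul, transpose_transpose, transpose_mul, transpose_transpose,
      Matrix.mul_assoc]
  rw [frobNorm_sq, frobNorm_sq, frobNorm_sq, ← trace_transpose_mul_orthogonal hO B B,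
    transpose_sub, Matrix.sub_mul, Matrix.mul_sub, Matrix.mul_sub, trace_sub, trace_sub,
    trace_sub, ← hcross, ← trace_transpose (Aᵀ * (B * O)), transpose_mul, transpose_transpose]
  ring

lemma frobNorm_sub_mul_orthogonal_comm (A B : Matrix n n ℝ) {O : Matrix n n ℝ}
    (hO : O * Oᵀ = 1) : frobNorm (A - B * O) = frobNorm (B - A * Oᵀ) := by
  have h : (A - B * O) * Oᵀ = -(B - A * Oᵀ) := by
    rw [Matrix.sub_mul, Matrix.mul_assoc, hO, Matrix.mul_one, neg_sub]
  rw [← frobNorm_mul_orthogonal (A - B * O) (O := Oᵀ) (by rwa [transpose_transpose,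
    mul_eq_one_comm]), h, frobNorm_neg]

end Frobenius

section BlockOrthogonal

variable {d T : ℕ}

lemma memO.mul_transpose {O : Mat d T} (hO : memO O) : O * Oᵀ = 1 :=
  mul_eq_one_comm.mp hO.2

lemma memO_one : memO (1 : Mat d T) :=
  ⟨fun _ _ _ _ hts => one_apply_ne (by simp [hts]), by simp⟩

lemma memO.transpose {O : Mat d T} (hO : memO O) : memO Oᵀ :=
  ⟨fun t s i j hts => hO.1 s t j i hts.symm, by rw [transpose_transpose, hO.mul_transpose]⟩

lemma memO.mul {O P : Mat d T} (hO : memO O) (hP : memO P) : memO (O * P) := by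
  refine ⟨fun t s i j hts => ?_, ?_⟩
  · refine (mul_apply ..).trans (Finset.sum_eq_zero fun ⟨u, k⟩ _ => ?_)
    by_cases hut : u = t
    · subst hut
      rw [hP.1 u s k j hts, mul_zero]
    · rw [hO.1 t u i k (Ne.symm hut), zero_mul]
  · rw [transpose_mul, Matrix.mul_assoc, ← Matrix.mul_assoc Oᵀ, hO.2, Matrix.one_mul, hP.2]

lemma trace_transpose_mul_blockDiagonal_of_isSymm {X O : Mat d T}
    (hO : ∀ (t s : Fin T) (i j : Fin d), t ≠ s → O (t, i) (s, j) = 0)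
    (hX : ∀ t : Fin T, (blk X t).IsSymm) : (Xᵀ * O).trace = (X * O).trace := by
  refine Finset.sum_congr rfl fun ⟨t, i⟩ _ => Finset.sum_congr rfl fun ⟨s, j⟩ _ => ?_
  by_cases hst : s = t
  · subst hst
    simpa [blk] using congrArg (· * O (s, j) (s, i)) (congrFun (congrFun (hX s) i) j)
  · simp [hO s t j i hst]

end BlockOrthogonal

section Optimizers

variable {d T : ℕ}

lemma dABW_le (L M : Mat d T) {O : Mat d T} (hO : memO O) :
    dABW L M ≤ frobNorm (L - M * O) :=
  csInf_le ⟨0, by rintro r ⟨O', _, rfl⟩; exact frobNorm_nonneg _⟩ ⟨O, hO, rfl⟩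

lemma dABW_nonneg (L M : Mat d T) : 0 ≤ dABW L M :=
  le_csInf ⟨_, 1, memO_one, rfl⟩ (by rintro r ⟨O, _, rfl⟩; exact frobNorm_nonneg _)

lemma dABW_self (L : Mat d T) : dABW L L = 0 :=
  le_antisymm (by simpa [frobNorm] using dABW_le L L memO_one) (dABW_nonneg L L)

lemma dABW_comm (L M : Mat d T) : dABW L M = dABW M L := by
  have hsub : ∀ A B : Mat d T, {r | ∃ O, memO O ∧ r = frobNorm (A - B * O)} ⊆
      {r | ∃ O, memO O ∧ r = frobNorm (B - A * O)} := by
    rintro A B r ⟨O, hO, rfl⟩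
    exact ⟨Oᵀ, hO.transpose, frobNorm_sub_mul_orthogonal_comm A B hO.mul_transpose⟩
  exact congrArg sInf ((hsub L M).antisymm (hsub M L))

lemma mul_eq_self_of_mem_OStar_self {L O : Mat d T} (hO : O ∈ OStar L L) : L * O = L := by
  have h : frobNorm (L - L * O) = 0 := hO.2.trans (dABW_self L)
  exact (sub_eq_zero.mp (frobNorm_eq_zero_iff.mp h)).symm

lemma mul_mem_OStar {L M O P : Mat d T} (hO : O ∈ OStar L L) (hP : P ∈ OStar L M) :
    P * O ∈ OStar L M := by
  have h : L - M * (P * O) = (L - M * P) * O := by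
    rw [Matrix.sub_mul, mul_eq_self_of_mem_OStar_self hO, Matrix.mul_assoc]
  refine ⟨hP.1.mul hO.1, ?_⟩
  rw [h, frobNorm_mul_orthogonal _ hO.1.mul_transpose, hP.2]

lemma transpose_mem_OStar {L M P : Mat d T} (hP : P ∈ OStar L M) : Pᵀ ∈ OStar M L := by
  refine ⟨hP.1.transpose, ?_⟩
  rw [← dABW_comm, ← hP.2, frobNorm_sub_mul_orthogonal_comm L M hP.1.mul_transpose]

lemma frobNorm_sub_mul_comm_of_isSymm {L M O : Mat d T} (hO : memO O)
    (hML : ∀ t : Fin T, (blk (Mᵀ * L) t).IsSymm) :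
    frobNorm (L - M * O) = frobNorm (M - L * O) := by
  have hLM : (Lᵀ * M)ᵀ = Mᵀ * L := by rw [transpose_mul, transpose_transpose]
  rw [← sq_eq_sq₀ (frobNorm_nonneg _) (frobNorm_nonneg _),
    frobNorm_sub_mul_orthogonal_sq L M hO.mul_transpose,
    frobNorm_sub_mul_orthogonal_sq M L hO.mul_transpose, hLM,
    trace_transpose_mul_blockDiagonal_of_isSymm hO.1 hML]
  ring

lemma OStar_comm_of_isSymm {L M : Mat d T} (hML : ∀ t : Fin T, (blk (Mᵀ * L) t).IsSymm) :
    OStar L M = OStar M L := by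
  ext O
  refine and_congr_right fun hO => ?_
  rw [frobNorm_sub_mul_comm_of_isSymm hO hML, dABW_comm]

end Optimizers

theorem stmt4_general (d T : ℕ) (L M : Mat d T) :
    (∀ O P : Mat d T, O ∈ OStar L L → P ∈ OStar L M → P * O ∈ OStar L M) ∧
    (∀ P : Mat d T, P ∈ OStar L M → Pᵀ ∈ OStar M L) ∧
    ((∀ t : Fin T, (blk (Mᵀ * L) t).IsSymm) → OStar L M = OStar M L) :=
  ⟨fun _ _ => mul_mem_OStar, fun _ => transpose_mem_OStar, OStar_comm_of_isSymm⟩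

/-- basic facts about `𝐎*(L,M)`: (a) stability under right multiplication by
`𝐎*(L,L)`, (b) `P ∈ 𝐎*(L,M)` implies `Pᵀ ∈ 𝐎*(M,L)`, (c) symmetry of the diagonal blocks of
`MᵀL` implies `𝐎*(L,M) = 𝐎*(M,L)`. -/
theorem stmt4 (d T : ℕ) (hd : 0 < d) (hT : 0 < T) (L M : Mat d T)
    (hL : memL L) (hM : memL M) :
    (∀ O P : Mat d T, O ∈ OStar L L → P ∈ OStar L M → P * O ∈ OStar L M) ∧
    (∀ P : Mat d T, P ∈ OStar L M → Pᵀ ∈ OStar M L) ∧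
    ((∀ t : Fin T, (blk (Mᵀ * L) t).IsSymm) → OStar L M = OStar M L) :=
  stmt4_general d T L M
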